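/- arXiv:1910.14089 — 2 statements merged into one kernel-verified Lean document; each statement's English description precedes it below -/
import Mathlib

section
/- Let Γ^M be smooth source Christoffel symbols on ℝ^m and Γ^N smooth target Christoffel symbols on ℝ^n, and assume that for every point p ∈ ℝ^m and every vector v ∈ ℝ^m there exist ε > 0 and a geodesic x : (−ε, ε) → ℝ^m of Γ^M with x(0) = p and ẋ(0) = v. If φ : ℝ^m → ℝ^n is a smooth geodesic mapping, i.e. for every geodesic x of Γ^M the curve φ∘x is a geodesic of Γ^N, then φ satisfies the geodesic mapping equation: for every p ∈ ℝ^m and all indices σ, i, j, [ φ^σ_{ij} − Γ^k_{ij} φ^σ_k + Γ^σ_{αλ}(φ) φ^α_i φ^λ_j ](p) = 0. -/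
/-- Partial derivative of `f : ℝ^d → ℝ` in the `i`-th coordinate direction at `x`. -/
noncomputable def pd {d : ℕ} (f : (Fin d → ℝ) → ℝ) (i : Fin d) (x : Fin d → ℝ) : ℝ :=
  fderiv ℝ f x (Pi.single i 1)

lemma lin_expand {d : ℕ} {F : Type*} [NormedAddCommGroup F] [NormedSpace ℝ F]
    (L : (Fin d → ℝ) →L[ℝ] F) (v : Fin d → ℝ) :
    L v = ∑ i, v i • L (Pi.single i 1) := by
  have hv : v = ∑ i, v i • (Pi.single i 1 : Fin d → ℝ) := by
    funext t
    simp [Finset.sum_apply, Pi.single_apply]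
  conv_lhs => rw [hv]
  simp

lemma lin_expand' {d : ℕ} (L : (Fin d → ℝ) →L[ℝ] ℝ) (v : Fin d → ℝ) :
    L v = ∑ i, v i * L (Pi.single i 1) := lin_expand L v

lemma bilin_expand {d : ℕ} (L : (Fin d → ℝ) →L[ℝ] ((Fin d → ℝ) →L[ℝ] ℝ)) (v w : Fin d → ℝ) :
    L v w = ∑ i, ∑ j, v i * w j * L (Pi.single i 1) (Pi.single j 1) := by
  rw [lin_expand L v, ContinuousLinearMap.sum_apply]
  refine Finset.sum_congr rfl fun i _ => ?_
  rw [ContinuousLinearMap.smul_apply, lin_expand' (L (Pi.single i 1)) w, smul_eq_mul,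
    Finset.mul_sum]
  exact Finset.sum_congr rfl fun j _ => by ring

/-- If geodesics of the source connection exist with arbitrary initial conditions and the
smooth map `φ` sends every geodesic of `ΓM` to a geodesic of `ΓN`, then `φ` satisfies the
geodesic mapping equation `φ^σ_{ij} − Γ^k_{ij} φ^σ_k + Γ^σ_{αλ}(φ) φ^α_i φ^λ_j = 0`. -/
theorem stmt2 (m n : ℕ)
    (ΓM : Fin m → Fin m → Fin m → (Fin m → ℝ) → ℝ)
    (ΓN : Fin n → Fin n → Fin n → (Fin n → ℝ) → ℝ)
    (hΓM : ∀ k i j, ContDiff ℝ (⊤ : ℕ∞) (ΓM k i j))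
    (hΓMsym : ∀ k i j, ΓM k i j = ΓM k j i)
    (hΓN : ∀ σ α lam, ContDiff ℝ (⊤ : ℕ∞) (ΓN σ α lam))
    (hΓNsym : ∀ σ α lam, ΓN σ α lam = ΓN σ lam α)
    (hexist : ∀ p v : Fin m → ℝ, ∃ ε : ℝ, 0 < ε ∧ ∃ x : ℝ → Fin m → ℝ,
      ContDiffOn ℝ 2 x (Set.Ioo (-ε) ε) ∧ x 0 = p ∧
      (∀ i, deriv (fun s => x s i) 0 = v i) ∧
      (∀ t ∈ Set.Ioo (-ε) ε, ∀ h : Fin m,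
        deriv (deriv fun s => x s h) t
          + ∑ i, ∑ j, ΓM h i j (x t) * deriv (fun s => x s i) t * deriv (fun s => x s j) t
          = 0))
    (φ : (Fin m → ℝ) → Fin n → ℝ)
    (hφ : ContDiff ℝ (⊤ : ℕ∞) φ)
    (hgeomap : ∀ (a b : ℝ) (x : ℝ → Fin m → ℝ),
      ContDiffOn ℝ 2 x (Set.Ioo a b) →
      (∀ t ∈ Set.Ioo a b, ∀ h : Fin m,
        deriv (deriv fun s => x s h) t
          + ∑ i, ∑ j, ΓM h i j (x t) * deriv (fun s => x s i) t * deriv (fun s => x s j) t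
          = 0) →
      ∀ t ∈ Set.Ioo a b, ∀ σ : Fin n,
        deriv (deriv fun s => φ (x s) σ) t
          + ∑ μ, ∑ ν, ΓN σ μ ν (φ (x t)) * deriv (fun s => φ (x s) μ) t
              * deriv (fun s => φ (x s) ν) t
          = 0) :
    ∀ (p : Fin m → ℝ) (σ : Fin n) (i j : Fin m),
      pd (pd (fun z => φ z σ) j) i p
        - ∑ k, ΓM k i j p * pd (fun z => φ z σ) k p
        + ∑ α, ∑ lam, ΓN σ α lam (φ p) * pd (fun z => φ z α) i p * pd (fun z => φ z lam) j p
        = 0 := by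
  intro p σ i j
  -- smoothness of components of φ
  have hC : ∀ μ : Fin n, ContDiff ℝ (⊤ : ℕ∞) (fun z => φ z μ) := fun μ =>
    (ContinuousLinearMap.proj (R := ℝ) (φ := fun _ : Fin n => ℝ) μ).contDiff.comp hφ
  have hC1 : ∀ μ : Fin n, ContDiff ℝ 1 (fderiv ℝ (fun z => φ z μ)) := fun μ =>
    (hC μ).fderiv_right (WithTop.coe_le_coe.mpr le_top)
  -- second-partial identification
  have hpdpd : ∀ (μ : Fin n) (i' j' : Fin m), pd (pd (fun z => φ z μ) j') i' p
      = (fderiv ℝ (fderiv ℝ (fun z => φ z μ)) p) (Pi.single i' 1) (Pi.single j' 1) := by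
    intro μ i' j'
    have hd : HasFDerivAt (fderiv ℝ (fun z => φ z μ))
        (fderiv ℝ (fderiv ℝ (fun z => φ z μ)) p) p :=
      (((hC1 μ).differentiable one_ne_zero) p).hasFDerivAt
    have h1 := hd.clm_apply (hasFDerivAt_const (Pi.single j' 1 : Fin m → ℝ) p)
    have h2 : pd (fun z => φ z μ) j' = fun z => (fderiv ℝ (fun z => φ z μ) z) (Pi.single j' 1) :=
      rfl
    rw [pd, h2, h1.fderiv]
    simp
  -- symmetry of second partials
  have hpdsym : ∀ (μ : Fin n) (i' j' : Fin m),
      pd (pd (fun z => φ z μ) j') i' p = pd (pd (fun z => φ z μ) i') j' p := by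
    intro μ i' j'
    rw [hpdpd, hpdpd]
    exact ((hC μ).contDiffAt.isSymmSndFDerivAt (by rw [minSmoothness_of_isRCLikeNormedField]; exact WithTop.coe_le_coe.mpr le_top)) _ _

  -- main identity for arbitrary initial velocity
  have key : ∀ v : Fin m → ℝ,
      (∑ i', ∑ j', v i' * v j' * pd (pd (fun z => φ z σ) j') i' p)
        - (∑ k, (∑ i', ∑ j', ΓM k i' j' p * v i' * v j') * pd (fun z => φ z σ) k p)
        + ∑ α, ∑ lam, ΓN σ α lam (φ p)
            * (∑ i', v i' * pd (fun z => φ z α) i' p)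
            * (∑ j', v j' * pd (fun z => φ z lam) j' p) = 0 := by
    intro v
    obtain ⟨ε, hε, x, hx2, hx0, hxv, hxgeo⟩ := hexist p v
    have hI0 : (0:ℝ) ∈ Set.Ioo (-ε) ε := ⟨neg_lt_zero.mpr hε, hε⟩
    have hIopen : IsOpen (Set.Ioo (-ε) ε) := isOpen_Ioo
    set x' : ℝ → Fin m → ℝ := fun t i' => deriv (fun s => x s i') t with hx'def
    have hdx : ∀ t ∈ Set.Ioo (-ε) ε, HasDerivAt x (x' t) t := by
      intro t ht
      have hxdiff : DifferentiableAt ℝ x t :=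
        (hx2.differentiableOn (by simp)).differentiableAt (hIopen.mem_nhds ht)
      rw [hasDerivAt_pi]
      intro i'
      exact (differentiableAt_pi.mp hxdiff i').hasDerivAt
    have hx'0 : x' 0 = v := funext hxv
    -- second derivatives of components of x exist at 0
    have hderivdiff : ∀ h : Fin m, DifferentiableAt ℝ (deriv (fun s => x s h)) 0 := by
      intro h
      have h2 : ContDiffOn ℝ 2 (fun s => x s h) (Set.Ioo (-ε) ε) :=
        (ContinuousLinearMap.proj (R := ℝ) (φ := fun _ : Fin m => ℝ) h).contDiff.comp_contDiffOn
          hx2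
      have h2' : ContDiffOn ℝ ((1:WithTop ℕ∞) + 1) (fun s => x s h) (Set.Ioo (-ε) ε) := by
        exact_mod_cast h2
      have h1 : ContDiffOn ℝ 1 (deriv fun s => x s h) (Set.Ioo (-ε) ε) :=
        ((contDiffOn_succ_iff_deriv_of_isOpen hIopen).mp h2').2.2
      exact (h1.differentiableOn one_ne_zero).differentiableAt (hIopen.mem_nhds hI0)
    set a : Fin m → ℝ := fun h => deriv (deriv fun s => x s h) 0 with hadef
    have hdx' : HasDerivAt x' a 0 := hasDerivAt_pi.mpr fun h => (hderivdiff h).hasDerivAt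
    have haval : ∀ h : Fin m, a h = -∑ i', ∑ j', ΓM h i' j' p * v i' * v j' := by
      intro h
      have hg := hxgeo 0 hI0 h
      rw [hx0] at hg
      simp only [hxv] at hg
      rw [hadef]
      linarith
    -- first derivative of φ ∘ x components at 0
    have hD1 : ∀ μ : Fin n, deriv (fun s => φ (x s) μ) 0
        = ∑ i', v i' * pd (fun z => φ z μ) i' p := by
      intro μ
      have hF : HasFDerivAt (fun z => φ z μ) (fderiv ℝ (fun z => φ z μ) p) (x 0) := by
        rw [hx0]; exact (((hC μ).differentiable (by simp)) p).hasFDerivAt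
      have hcmp : HasDerivAt (fun s => φ (x s) μ) (fderiv ℝ (fun z => φ z μ) p (x' 0)) 0 :=
        hF.comp_hasDerivAt 0 (hdx 0 hI0)
      rw [hx'0] at hcmp
      rw [hcmp.deriv]
      exact lin_expand' _ v
    -- second derivative of φ ∘ x in direction σ at 0
    have hg' : deriv (fun s => φ (x s) σ) =ᶠ[nhds (0:ℝ)]
        fun t => fderiv ℝ (fun z => φ z σ) (x t) (x' t) := by
      filter_upwards [hIopen.mem_nhds hI0] with t ht
      have hF : HasFDerivAt (fun z => φ z σ) (fderiv ℝ (fun z => φ z σ) (x t)) (x t) :=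
        (((hC σ).differentiable (by simp)) (x t)).hasFDerivAt
      have hcmp : HasDerivAt (fun s => φ (x s) σ) (fderiv ℝ (fun z => φ z σ) (x t) (x' t)) t :=
        hF.comp_hasDerivAt t (hdx t ht)
      exact hcmp.deriv
    have hd2 : deriv (deriv fun s => φ (x s) σ) 0
        = (fderiv ℝ (fderiv ℝ (fun z => φ z σ)) p) v v + fderiv ℝ (fun z => φ z σ) p a := by
      rw [hg'.deriv_eq]
      have hA : HasDerivAt (fun t => fderiv ℝ (fun z => φ z σ) (x t))
          (fderiv ℝ (fderiv ℝ (fun z => φ z σ)) p v) 0 := by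
        have hF : HasFDerivAt (fderiv ℝ (fun z => φ z σ))
            (fderiv ℝ (fderiv ℝ (fun z => φ z σ)) p) (x 0) := by
          rw [hx0]; exact (((hC1 σ).differentiable one_ne_zero) p).hasFDerivAt
        have hcmp : HasDerivAt (fun t => fderiv ℝ (fun z => φ z σ) (x t))
            (fderiv ℝ (fderiv ℝ (fun z => φ z σ)) p (x' 0)) 0 := hF.comp_hasDerivAt 0 (hdx 0 hI0)
        rwa [hx'0] at hcmp
      have hAB := hA.clm_apply hdx'
      rw [hx'0, hx0] at hAB
      exact hAB.deriv
    -- the geodesic equation for the image curve at 0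
    have geoN := hgeomap (-ε) ε x hx2 hxgeo 0 hI0 σ
    rw [hd2, hx0] at geoN
    simp only [hD1] at geoN
    rw [bilin_expand, lin_expand' (fderiv ℝ (fun z => φ z σ) p) a] at geoN
    simp only [haval] at geoN
    have : ∀ i' j', v i' * v j' * (fderiv ℝ (fderiv ℝ (fun z => φ z σ)) p)
        (Pi.single i' 1) (Pi.single j' 1)
        = v i' * v j' * pd (pd (fun z => φ z σ) j') i' p := by
      intro i' j'; rw [hpdpd]
    simp only [this] at geoN
    simp only [neg_mul, Finset.sum_neg_distrib, pd] at geoN ⊢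
    linarith [geoN]

  have hCsym : ∀ i' j' : Fin m,
      (∑ α, ∑ lam, ΓN σ α lam (φ p) * pd (fun z => φ z α) i' p * pd (fun z => φ z lam) j' p)
      = ∑ α, ∑ lam, ΓN σ α lam (φ p) * pd (fun z => φ z α) j' p * pd (fun z => φ z lam) i' p := by
    intro i' j'
    rw [Finset.sum_comm]
    refine Finset.sum_congr rfl fun α _ => Finset.sum_congr rfl fun lam _ => ?_
    rw [hΓNsym]; ring
  have hMsym : ∀ i' j' : Fin m,
      (∑ k, ΓM k i' j' p * pd (fun z => φ z σ) k p)
      = ∑ k, ΓM k j' i' p * pd (fun z => φ z σ) k p :=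
    fun i' j' => Finset.sum_congr rfl fun k _ => by rw [hΓMsym]
  have hii := key (Pi.single i 1)
  have hjj := key (Pi.single j 1)
  have hij := key (Pi.single i 1 + Pi.single j 1)
  simp only [Pi.add_apply, Pi.single_apply, add_mul, mul_add, ite_mul, mul_ite, one_mul,
    mul_one, zero_mul, mul_zero, Finset.sum_add_distrib, Finset.sum_ite_eq, Finset.sum_ite_eq',
    Finset.mem_univ, if_true, add_zero, zero_add] at hii hjj hij
  linarith [hii, hjj, hij, hpdsym σ i j, hMsym j i, hCsym j i]
end

section
/- Let g^{ij} : ℝ^m → ℝ be smooth and symmetric in i,j, let h_{μν} : ℝ^m × ℝ^n → ℝ be smooth and symmetric in μ,ν, let Γ^k_{ij} : ℝ^m → ℝ be smooth and symmetric in i,j, and let Γ^σ_{αλ} : ℝ^n → ℝ be smooth and symmetric in α,λ. Assume the two variationality conditions hold identically: (i) ∂h_{μν}/∂y^λ = Γ^σ_{μλ}(y) h_{σν} + Γ^σ_{νλ}(y) h_{σμ}, and (ii) h_{μν} ( g^{ij} Γ^l_{ij} + Σ_p ∂g^{lp}/∂x^p ) = −Σ_p (∂h_{μν}/∂x^p)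 g^{lp}. Define the Lagrangian L(x, y, u) := ½ Σ g^{ij}(x) h_{αλ}(x,y) u^α_i u^λ_j on ℝ^m × ℝ^n × ℝ^{n×m}. Then for every smooth map φ : ℝ^m → ℝ^n and every index σ, the Euler–Lagrange expression Σ_k (d/dx^k)[ (∂L/∂u^σ_k)(x, φ(x), Dφ(x)) ] − (∂L/∂y^σ)(x, φ(x), Dφ(x)) equals Σ g^{ij}(x) h_{σν}(x, φ(x)) [ φ^ν_{ij} − Γ^k_{ij}(x) φ^ν_k + Γ^ν_{αλ}(φ(x)) φ^α_i φ^λ_j ]. In other words, under (i) and (ii) the dynamical form obtained from the geodesic mapping equation by the multiplier B^{ij}_{σν} = g^{ij} h_{σν} is variational, with Lagrangian L. -/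
set_option maxHeartbeats 1000000



/-- Partial derivative in the base (`x`) variable of `f : ℝ^m × ℝ^n → ℝ`. -/
noncomputable def pdx {m n : ℕ} (f : (Fin m → ℝ) → (Fin n → ℝ) → ℝ) (p : Fin m)
    (x : Fin m → ℝ) (y : Fin n → ℝ) : ℝ :=
  fderiv ℝ (fun x' => f x' y) x (Pi.single p 1)

/-- Partial derivative in the fibre (`y`) variable of `f : ℝ^m × ℝ^n → ℝ`. -/
noncomputable def pdy {m n : ℕ} (f : (Fin m → ℝ) → (Fin n → ℝ) → ℝ) (lam : Fin n)
    (x : Fin m → ℝ) (y : Fin n → ℝ) : ℝ :=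
  fderiv ℝ (f x) y (Pi.single lam 1)

/-- The Jacobian matrix `Dφ(x) = (φ^σ_i(x))` of a map `φ : ℝ^m → ℝ^n`. -/
noncomputable def Dmap {m n : ℕ} (φ : (Fin m → ℝ) → Fin n → ℝ) (x : Fin m → ℝ) :
    Fin n → Fin m → ℝ := fun σ i => pd (fun z => φ z σ) i x

/-- The energy-type Lagrangian `L(x,y,u) = ½ g^{ij}(x) h_{αλ}(x,y) u^α_i u^λ_j`. -/
noncomputable def Lag {m n : ℕ} (g : Fin m → Fin m → (Fin m → ℝ) → ℝ)
    (h : Fin n → Fin n → (Fin m → ℝ) → (Fin n → ℝ) → ℝ)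
    (x : Fin m → ℝ) (y : Fin n → ℝ) (u : Fin n → Fin m → ℝ) : ℝ :=
  (1 / 2) * ∑ i, ∑ j, ∑ α, ∑ lam, g i j x * h α lam x y * u α i * u lam j


noncomputable def E {m n : ℕ} (α : Fin n) (i : Fin m) : (Fin n → Fin m → ℝ) →L[ℝ] ℝ :=
  (ContinuousLinearMap.proj i : (Fin m → ℝ) →L[ℝ] ℝ).comp
    (ContinuousLinearMap.proj α : (Fin n → Fin m → ℝ) →L[ℝ] (Fin m → ℝ))

lemma eval_hasFDerivAt {m n : ℕ} (α : Fin n) (i : Fin m) (U : Fin n → Fin m → ℝ) :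
    HasFDerivAt (fun u : Fin n → Fin m → ℝ => u α i) (E α i) U := by
  have := (E α i).hasFDerivAt (x := U)
  simpa [E, ContinuousLinearMap.coe_comp', Function.comp_def] using this

lemma eval_diff {m n : ℕ} (α : Fin n) (i : Fin m) (U : Fin n → Fin m → ℝ) :
    DifferentiableAt ℝ (fun u : Fin n → Fin m → ℝ => u α i) U :=
  (eval_hasFDerivAt α i U).differentiableAt

lemma lagU {m n : ℕ} (g : Fin m → Fin m → (Fin m → ℝ) → ℝ)
    (h : Fin n → Fin n → (Fin m → ℝ) → (Fin n → ℝ) → ℝ)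
    (hgsym : ∀ i j, g i j = g j i) (hhsym : ∀ μ ν, h μ ν = h ν μ)
    (x : Fin m → ℝ) (y : Fin n → ℝ) (U : Fin n → Fin m → ℝ) (σ : Fin n) (k : Fin m) :
    fderiv ℝ (fun u => Lag g h x y u) U (Pi.single σ (Pi.single k 1))
      = ∑ j, ∑ lam, g k j x * h σ lam x y * U lam j := by
  have key : HasFDerivAt (fun u : Fin n → Fin m → ℝ => Lag g h x y u)
      ((1/2 : ℝ) • ∑ i : Fin m, ∑ j : Fin m, ∑ α : Fin n, ∑ lam : Fin n,
        ((g i j x * h α lam x y * U lam j) • E α i + (g i j x * h α lam x y * U α i) • E lam j)) U := by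
    unfold Lag
    apply HasFDerivAt.const_mul
    apply HasFDerivAt.fun_sum; intro i _
    apply HasFDerivAt.fun_sum; intro j _
    apply HasFDerivAt.fun_sum; intro α _
    apply HasFDerivAt.fun_sum; intro lam _
    have := ((hasFDerivAt_const (g i j x * h α lam x y) U).fun_mul (eval_hasFDerivAt α i U)).fun_mul
      (eval_hasFDerivAt lam j U)
    refine this.congr_fderiv ?_
    ext v
    simp [E]
    ring
  rw [key.fderiv]
  simp only [ContinuousLinearMap.smul_apply, ContinuousLinearMap.sum_apply,
    ContinuousLinearMap.add_apply, ContinuousLinearMap.coe_smul', Pi.smul_apply, E,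
    ContinuousLinearMap.comp_apply, ContinuousLinearMap.proj_apply, smul_eq_mul]
  simp only [Pi.single_apply, ite_apply, Pi.zero_apply, mul_ite, mul_one, mul_zero, Finset.sum_ite_irrel,
    Finset.sum_const_zero, Finset.sum_ite_eq', Finset.mem_univ, if_true, Finset.sum_add_distrib]
  have e2 : (∑ j : Fin m, ∑ lam : Fin n, g j k x * h lam σ x y * U lam j)
      = ∑ j : Fin m, ∑ lam : Fin n, g k j x * h σ lam x y * U lam j := by
    refine Finset.sum_congr rfl fun j _ => Finset.sum_congr rfl fun lam _ => ?_
    rw [hgsym j k, hhsym lam σ]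
  rw [e2]; ring

-- smoothness helpers
lemma contDiff_fix_x {m n : ℕ} (f : Fin m → Fin m → (Fin m → ℝ) → ℝ) : True := trivial

lemma cd_y {m n : ℕ} (f : (Fin m → ℝ) → (Fin n → ℝ) → ℝ)
    (hf : ContDiff ℝ (⊤ : ℕ∞) fun p : (Fin m → ℝ) × (Fin n → ℝ) => f p.1 p.2) (x : Fin m → ℝ) :
    ContDiff ℝ (⊤ : ℕ∞) (f x) := by
  have := hf.comp ((contDiff_const (c := x)).prodMk contDiff_id)
  simpa [Function.comp_def] using this

lemma cd_x {m n : ℕ} (f : (Fin m → ℝ) → (Fin n → ℝ) → ℝ)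
    (hf : ContDiff ℝ (⊤ : ℕ∞) fun p : (Fin m → ℝ) × (Fin n → ℝ) => f p.1 p.2) (y : Fin n → ℝ) :
    ContDiff ℝ (⊤ : ℕ∞) (fun x' => f x' y) := by
  have := hf.comp (contDiff_id.prodMk (contDiff_const (c := y)))
  simpa [Function.comp_def] using this

lemma cd_comp {m n : ℕ} (f : (Fin m → ℝ) → (Fin n → ℝ) → ℝ)
    (hf : ContDiff ℝ (⊤ : ℕ∞) fun p : (Fin m → ℝ) × (Fin n → ℝ) => f p.1 p.2)
    (φ : (Fin m → ℝ) → Fin n → ℝ) (hφ : ContDiff ℝ (⊤ : ℕ∞) φ) :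
    ContDiff ℝ (⊤ : ℕ∞) (fun x' => f x' (φ x')) := by
  have := hf.comp (contDiff_id.prodMk hφ)
  simpa [Function.comp_def] using this

lemma cd_component {m n : ℕ} (φ : (Fin m → ℝ) → Fin n → ℝ) (hφ : ContDiff ℝ (⊤ : ℕ∞) φ)
    (lam : Fin n) : ContDiff ℝ (⊤ : ℕ∞) (fun z => φ z lam) := by
  have := (ContinuousLinearMap.proj lam : (Fin n → ℝ) →L[ℝ] ℝ).contDiff.comp hφ
  simpa [Function.comp_def] using this

lemma lagY {m n : ℕ} (g : Fin m → Fin m → (Fin m → ℝ) → ℝ)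
    (h : Fin n → Fin n → (Fin m → ℝ) → (Fin n → ℝ) → ℝ)
    (hh : ∀ μ ν, ContDiff ℝ (⊤ : ℕ∞) (fun p : (Fin m → ℝ) × (Fin n → ℝ) => h μ ν p.1 p.2))
    (x : Fin m → ℝ) (U : Fin n → Fin m → ℝ) (Y : Fin n → ℝ) (σ : Fin n) :
    fderiv ℝ (fun y => Lag g h x y U) Y (Pi.single σ 1)
      = (1/2) * ∑ i, ∑ j, ∑ α, ∑ lam,
          g i j x * pdy (h α lam) σ x Y * U α i * U lam j := by
  have hdy : ∀ α lam : Fin n, HasFDerivAt (h α lam x) (fderiv ℝ (h α lam x) Y) Y :=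
    fun α lam => by
      have hD : Differentiable ℝ (h α lam x) := (cd_y _ (hh α lam) x).differentiable (by simp)
      exact (hD Y).hasFDerivAt
  have key : HasFDerivAt (fun y => Lag g h x y U)
      ((1/2 : ℝ) • ∑ i : Fin m, ∑ j : Fin m, ∑ α : Fin n, ∑ lam : Fin n,
        ((g i j x * U α i * U lam j) • fderiv ℝ (h α lam x) Y)) Y := by
    unfold Lag
    apply HasFDerivAt.const_mul
    apply HasFDerivAt.fun_sum; intro i _
    apply HasFDerivAt.fun_sum; intro j _
    apply HasFDerivAt.fun_sum; intro α _
    apply HasFDerivAt.fun_sum; intro lam _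
    have := (((hdy α lam).const_mul (g i j x)).mul_const (U α i)).mul_const (U lam j)
    rw [show (g i j x * U α i * U lam j) • fderiv ℝ (h α lam x) Y
        = U lam j • (U α i • (g i j x • fderiv ℝ (h α lam x) Y)) by
      rw [smul_smul, smul_smul]; congr 1; ring]
    exact this
  rw [key.fderiv]
  simp only [ContinuousLinearMap.smul_apply, ContinuousLinearMap.sum_apply, smul_eq_mul, pdy]
  congr 1
  refine Finset.sum_congr rfl fun i _ => Finset.sum_congr rfl fun j _ =>
    Finset.sum_congr rfl fun α _ => Finset.sum_congr rfl fun lam _ => by ring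

lemma fderiv_linear_expand {d : ℕ} (q : (Fin d → ℝ) → ℝ) (b : Fin d → ℝ) (w : Fin d → ℝ) :
    fderiv ℝ q b w = ∑ lam, w lam * fderiv ℝ q b (Pi.single lam 1) := by
  have hw : w = ∑ lam, w lam • (Pi.single lam 1 : Fin d → ℝ) := by
    rw [show (∑ lam, w lam • (Pi.single lam 1 : Fin d → ℝ))
        = ∑ lam, Pi.single lam (w lam) from Finset.sum_congr rfl fun lam _ => by
          rw [← Pi.single_smul, smul_eq_mul, mul_one], Finset.univ_sum_single]
  conv_lhs => rw [hw]
  rw [map_sum]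
  exact Finset.sum_congr rfl fun lam _ => by rw [map_smul]; rfl

lemma pd_component {m n : ℕ} (φ : (Fin m → ℝ) → Fin n → ℝ) (hφ : ContDiff ℝ (⊤ : ℕ∞) φ)
    (μ : Fin n) (x v : Fin m → ℝ) :
    fderiv ℝ φ x v μ = fderiv ℝ (fun z => φ z μ) x v := by
  have hd : DifferentiableAt ℝ φ x := (hφ.differentiable (by simp)).differentiableAt
  have h : HasFDerivAt (fun z => φ z μ)
      ((ContinuousLinearMap.proj μ : (Fin n → ℝ) →L[ℝ] ℝ).comp (fderiv ℝ φ x)) x := by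
    have := ((ContinuousLinearMap.proj μ : (Fin n → ℝ) →L[ℝ] ℝ).hasFDerivAt
      (x := φ x)).comp x hd.hasFDerivAt
    simpa [Function.comp_def] using this
  rw [h.fderiv]; rfl

lemma contDiff_pd {d : ℕ} (f : (Fin d → ℝ) → ℝ) (hf : ContDiff ℝ (⊤ : ℕ∞) f) (j : Fin d) :
    ContDiff ℝ (⊤ : ℕ∞) (fun x => pd f j x) := by
  unfold pd
  exact (hf.fderiv_right (by simp)).clm_apply contDiff_const

lemma fderiv_comp_prod {m n : ℕ} (f : (Fin m → ℝ) → (Fin n → ℝ) → ℝ)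
    (hf : ContDiff ℝ (⊤ : ℕ∞) fun p : (Fin m → ℝ) × (Fin n → ℝ) => f p.1 p.2)
    (φ : (Fin m → ℝ) → Fin n → ℝ) (hφ : ContDiff ℝ (⊤ : ℕ∞) φ) (x v : Fin m → ℝ) :
    fderiv ℝ (fun x' => f x' (φ x')) x v
      = fderiv ℝ (fun x' => f x' (φ x)) x v + fderiv ℝ (f x) (φ x) (fderiv ℝ φ x v) := by
  set F := fun p : (Fin m → ℝ) × (Fin n → ℝ) => f p.1 p.2 with hF
  have hFd : DifferentiableAt ℝ F (x, φ x) := (hf.differentiable (by simp)).differentiableAt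
  have hφd : DifferentiableAt ℝ φ x := (hφ.differentiable (by simp)).differentiableAt
  have h1 : HasFDerivAt (fun x' => f x' (φ x'))
      ((fderiv ℝ F (x, φ x)).comp
        ((ContinuousLinearMap.id ℝ (Fin m → ℝ)).prod (fderiv ℝ φ x))) x := by
    have := hFd.hasFDerivAt.comp x ((hasFDerivAt_id x).prodMk hφd.hasFDerivAt)
    simpa [Function.comp_def, hF] using this
  have h2 : HasFDerivAt (fun x' => f x' (φ x))
      ((fderiv ℝ F (x, φ x)).comp
        ((ContinuousLinearMap.id ℝ (Fin m → ℝ)).prod 0)) x := by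
    have := hFd.hasFDerivAt.comp x ((hasFDerivAt_id (𝕜 := ℝ) x).prodMk (hasFDerivAt_const (φ x) x))
    simpa [Function.comp_def, hF] using this
  have h3 : HasFDerivAt (f x)
      ((fderiv ℝ F (x, φ x)).comp
        ((0 : (Fin n → ℝ) →L[ℝ] (Fin m → ℝ)).prod (ContinuousLinearMap.id ℝ (Fin n → ℝ)))) (φ x) := by
    have := hFd.hasFDerivAt.comp (φ x) ((hasFDerivAt_const x (φ x)).prodMk (hasFDerivAt_id (φ x)))
    simpa [Function.comp_def, hF] using this
  rw [h1.fderiv, h2.fderiv, h3.fderiv]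
  simp only [ContinuousLinearMap.comp_apply, ContinuousLinearMap.prod_apply,
    ContinuousLinearMap.id_apply, ContinuousLinearMap.zero_apply]
  rw [← map_add]
  congr 1
  simp [Prod.ext_iff]


lemma pdF {m n : ℕ} (g : Fin m → Fin m → (Fin m → ℝ) → ℝ)
    (hg : ∀ i j, ContDiff ℝ (⊤ : ℕ∞) (g i j))
    (h : Fin n → Fin n → (Fin m → ℝ) → (Fin n → ℝ) → ℝ)
    (hh : ∀ μ ν, ContDiff ℝ (⊤ : ℕ∞) (fun p : (Fin m → ℝ) × (Fin n → ℝ) => h μ ν p.1 p.2))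
    (φ : (Fin m → ℝ) → Fin n → ℝ) (hφ : ContDiff ℝ (⊤ : ℕ∞) φ)
    (σ : Fin n) (k : Fin m) (x : Fin m → ℝ) :
    pd (fun x' => ∑ j, ∑ lam, g k j x' * h σ lam x' (φ x') * pd (fun z => φ z lam) j x') k x
      = ∑ j, ∑ lam,
          ( pd (g k j) k x * h σ lam x (φ x) * pd (fun z => φ z lam) j x
          + g k j x * (pdx (h σ lam) k x (φ x)
              + ∑ μ, pdy (h σ lam) μ x (φ x) * pd (fun z => φ z μ) k x)
              * pd (fun z => φ z lam) j x
          + g k j x * h σ lam x (φ x) * pd (pd (fun z => φ z lam) j) k x ) := by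
  have d1 : ∀ j : Fin m, HasFDerivAt (g k j) (fderiv ℝ (g k j) x) x := fun j => by
    have hD : Differentiable ℝ (g k j) := (hg k j).differentiable (by simp)
    exact (hD x).hasFDerivAt
  have d2 : ∀ lam : Fin n, HasFDerivAt (fun x' => h σ lam x' (φ x'))
      (fderiv ℝ (fun x' => h σ lam x' (φ x')) x) x := fun lam => by
    have hD : Differentiable ℝ (fun x' => h σ lam x' (φ x')) :=
      (cd_comp _ (hh σ lam) φ hφ).differentiable (by simp)
    exact (hD x).hasFDerivAt
  have d3 : ∀ (lam : Fin n) (j : Fin m),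
      HasFDerivAt (fun x' => pd (fun z => φ z lam) j x')
        (fderiv ℝ (fun x' => pd (fun z => φ z lam) j x') x) x := fun lam j => by
    have hD : Differentiable ℝ (fun x' => pd (fun z => φ z lam) j x') :=
      (contDiff_pd _ (cd_component φ hφ lam) j).differentiable (by simp)
    exact (hD x).hasFDerivAt
  have key : HasFDerivAt
      (fun x' => ∑ j, ∑ lam, g k j x' * h σ lam x' (φ x') * pd (fun z => φ z lam) j x')
      (∑ j : Fin m, ∑ lam : Fin n,
        ((g k j x * h σ lam x (φ x)) • fderiv ℝ (fun x' => pd (fun z => φ z lam) j x') x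
          + pd (fun z => φ z lam) j x •
            (g k j x • fderiv ℝ (fun x' => h σ lam x' (φ x')) x
              + h σ lam x (φ x) • fderiv ℝ (g k j) x))) x := by
    apply HasFDerivAt.fun_sum; intro j _
    apply HasFDerivAt.fun_sum; intro lam _
    exact ((d1 j).fun_mul (d2 lam)).fun_mul (d3 lam j)
  have : pd (fun x' => ∑ j, ∑ lam, g k j x' * h σ lam x' (φ x')
      * pd (fun z => φ z lam) j x') k x
      = (∑ j : Fin m, ∑ lam : Fin n,
        ((g k j x * h σ lam x (φ x)) • fderiv ℝ (fun x' => pd (fun z => φ z lam) j x') x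
          + pd (fun z => φ z lam) j x •
            (g k j x • fderiv ℝ (fun x' => h σ lam x' (φ x')) x
              + h σ lam x (φ x) • fderiv ℝ (g k j) x))) (Pi.single k 1) := by
    have e0 : pd (fun x' => ∑ j, ∑ lam, g k j x' * h σ lam x' (φ x')
        * pd (fun z => φ z lam) j x') k x
        = fderiv ℝ (fun x' => ∑ j, ∑ lam, g k j x' * h σ lam x' (φ x')
            * pd (fun z => φ z lam) j x') x (Pi.single k 1) := rfl
    rw [e0, key.fderiv]
  rw [this]
  simp only [ContinuousLinearMap.sum_apply, ContinuousLinearMap.add_apply,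
    ContinuousLinearMap.smul_apply, smul_eq_mul]
  refine Finset.sum_congr rfl fun j _ => Finset.sum_congr rfl fun lam _ => ?_
  have e2 : fderiv ℝ (fun x' => h σ lam x' (φ x')) x (Pi.single k 1)
      = pdx (h σ lam) k x (φ x)
        + ∑ μ, pdy (h σ lam) μ x (φ x) * pd (fun z => φ z μ) k x := by
    rw [fderiv_comp_prod (h σ lam) (hh σ lam) φ hφ x (Pi.single k 1)]
    rw [fderiv_linear_expand (h σ lam x) (φ x) (fderiv ℝ φ x (Pi.single k 1))]
    congr 1
    refine Finset.sum_congr rfl fun μ _ => ?_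
    rw [pd_component φ hφ μ x (Pi.single k 1)]
    simp only [pdy, pd]
    exact mul_comm _ _
  rw [e2]
  have e1 : fderiv ℝ (g k j) x (Pi.single k 1) = pd (g k j) k x := rfl
  have e3 : fderiv ℝ (fun x' => pd (fun z => φ z lam) j x') x (Pi.single k 1)
      = pd (pd (fun z => φ z lam) j) k x := rfl
  rw [e1, e3]
  ring

section helpers
variable {α β γ : Type*} [Fintype α] [Fintype β] [Fintype γ]

lemma rot3 (f : α → β → γ → ℝ) :
    ∑ a, ∑ b, ∑ c, f a b c = ∑ c, ∑ a, ∑ b, f a b c := by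
  calc ∑ a, ∑ b, ∑ c, f a b c
      = ∑ a, ∑ c, ∑ b, f a b c := Finset.sum_congr rfl fun a _ => Finset.sum_comm
    _ = ∑ c, ∑ a, ∑ b, f a b c := Finset.sum_comm

lemma swap13 (f : α → β → γ → ℝ) :
    ∑ a, ∑ b, ∑ c, f a b c = ∑ c, ∑ b, ∑ a, f a b c := by
  calc ∑ a, ∑ b, ∑ c, f a b c
      = ∑ c, ∑ a, ∑ b, f a b c := rot3 f
    _ = ∑ c, ∑ b, ∑ a, f a b c := Finset.sum_congr rfl fun c _ => Finset.sum_comm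

lemma rot3' (f : α → β → γ → ℝ) :
    ∑ a, ∑ b, ∑ c, f a b c = ∑ b, ∑ c, ∑ a, f a b c := by
  calc ∑ a, ∑ b, ∑ c, f a b c
      = ∑ b, ∑ a, ∑ c, f a b c := Finset.sum_comm
    _ = ∑ b, ∑ c, ∑ a, f a b c := Finset.sum_congr rfl fun b _ => Finset.sum_comm

lemma reorder4 {δ : Type*} [Fintype δ] (f : α → β → γ → δ → ℝ) :
    ∑ a, ∑ b, ∑ c, ∑ d, f a b c d = ∑ d, ∑ c, ∑ a, ∑ b, f a b c d := by
  calc ∑ a, ∑ b, ∑ c, ∑ d, f a b c d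
      = ∑ a, ∑ b, ∑ d, ∑ c, f a b c d :=
        Finset.sum_congr rfl fun a _ => Finset.sum_congr rfl fun b _ => Finset.sum_comm
    _ = ∑ d, ∑ a, ∑ b, ∑ c, f a b c d := rot3 (fun a b d => ∑ c, f a b c d)
    _ = ∑ d, ∑ c, ∑ a, ∑ b, f a b c d :=
        Finset.sum_congr rfl fun d _ => rot3 (fun a b c => f a b c d)
end helpers

lemma algebra (m n : ℕ) (G : Fin m → Fin m → ℝ) (hG : ∀ i j, G i j = G j i)
    (D : Fin m → Fin m → Fin m → ℝ) (hD : ∀ a b c, D a b c = D b a c)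
    (H : Fin n → Fin n → ℝ) (hH : ∀ a b, H a b = H b a)
    (Hx : Fin n → Fin n → Fin m → ℝ)
    (Hy : Fin n → Fin n → Fin n → ℝ)
    (CM : Fin m → Fin m → Fin m → ℝ)
    (CN : Fin n → Fin n → Fin n → ℝ) (hCN : ∀ s a b, CN s a b = CN s b a)
    (P : Fin n → Fin m → ℝ) (P2 : Fin n → Fin m → Fin m → ℝ)
    (σ : Fin n)
    (hco : ∀ μ ν lam, Hy μ ν lam = ∑ s, (CN s μ lam * H s ν + CN s ν lam * H s μ))
    (htr : ∀ l μ ν, H μ ν * ((∑ i, ∑ j, G i j * CM l i j) + ∑ p, D l p p)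
        = -∑ p, Hx μ ν p * G l p) :
    (∑ k, ∑ j, ∑ lam, (D k j k * H σ lam * P lam j
        + G k j * (Hx σ lam k + ∑ μ, Hy σ lam μ * P μ k) * P lam j
        + G k j * H σ lam * P2 lam j k))
      - (1/2) * ∑ i, ∑ j, ∑ α, ∑ lam, G i j * Hy α lam σ * P α i * P lam j
    = ∑ i, ∑ j, ∑ ν, G i j * H σ ν * (P2 ν j i - ∑ k, CM k i j * P ν k
        + ∑ α, ∑ lam, CN ν α lam * P α i * P lam j) := by
  -- abbreviations for the pieces
  set B1 : Fin m → Fin m → ℝ :=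
    fun i j => ∑ α, ∑ lam, ∑ s, CN s α σ * H s lam * P α i * P lam j with hB1
  set C : Fin m → Fin m → ℝ :=
    fun i j => ∑ ν, ∑ α, ∑ lam, H σ ν * CN ν α lam * P α i * P lam j with hC
  -- LHS splits
  have hsplit : (∑ k, ∑ j, ∑ lam, (D k j k * H σ lam * P lam j
        + G k j * (Hx σ lam k + ∑ μ, Hy σ lam μ * P μ k) * P lam j
        + G k j * H σ lam * P2 lam j k))
      = ((∑ k, ∑ j, ∑ lam, (D k j k * H σ lam * P lam j + G k j * Hx σ lam k * P lam j))
        + ∑ k, ∑ j, G k j * B1 k j + ∑ k, ∑ j, G k j * C k j)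
        + ∑ k, ∑ j, ∑ lam, G k j * H σ lam * P2 lam j k := by
    have e1 : ∀ k j : Fin m,
        (∑ lam, G k j * (∑ μ, Hy σ lam μ * P μ k) * P lam j) = G k j * B1 k j + G k j * C k j := by
      intro k j
      have step1 : (∑ lam, G k j * (∑ μ, Hy σ lam μ * P μ k) * P lam j)
          = (∑ lam, ∑ μ, ∑ s, G k j * (CN s σ μ * H s lam * P μ k * P lam j))
            + ∑ lam, ∑ μ, ∑ s, G k j * (CN s lam μ * H s σ * P μ k * P lam j) := by
        rw [← Finset.sum_add_distrib]
        refine Finset.sum_congr rfl fun lam _ => ?_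
        rw [← Finset.sum_add_distrib, Finset.mul_sum, Finset.sum_mul]
        refine Finset.sum_congr rfl fun μ _ => ?_
        rw [← Finset.sum_add_distrib, hco σ lam μ, Finset.sum_mul, Finset.mul_sum,
          Finset.sum_mul]
        refine Finset.sum_congr rfl fun s _ => ?_
        ring
      rw [step1]
      congr 1
      · -- first part = G k j * B1 k j
        rw [hB1, Finset.mul_sum]
        rw [Finset.sum_comm]
        refine Finset.sum_congr rfl fun α _ => ?_
        rw [Finset.mul_sum]
        refine Finset.sum_congr rfl fun lam _ => ?_
        rw [Finset.mul_sum]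
        refine Finset.sum_congr rfl fun s _ => ?_
        rw [hCN s σ α]
      · -- second part = G k j * C k j
        rw [hC, Finset.mul_sum]
        rw [swap13 (fun lam μ s => G k j * (CN s lam μ * H s σ * P μ k * P lam j))]
        refine Finset.sum_congr rfl fun s _ => ?_
        rw [Finset.mul_sum]
        refine Finset.sum_congr rfl fun μ _ => ?_
        rw [Finset.mul_sum]
        refine Finset.sum_congr rfl fun lam _ => ?_
        rw [hCN s lam μ, hH s σ]
        ring
    have expand : (∑ k, ∑ j, ∑ lam, (D k j k * H σ lam * P lam j
          + G k j * (Hx σ lam k + ∑ μ, Hy σ lam μ * P μ k) * P lam j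
          + G k j * H σ lam * P2 lam j k))
        = ∑ k, ∑ j, ((∑ lam, (D k j k * H σ lam * P lam j + G k j * Hx σ lam k * P lam j))
            + (∑ lam, G k j * (∑ μ, Hy σ lam μ * P μ k) * P lam j)
            + ∑ lam, G k j * H σ lam * P2 lam j k) := by
      refine Finset.sum_congr rfl fun k _ => Finset.sum_congr rfl fun j _ => ?_
      rw [← Finset.sum_add_distrib, ← Finset.sum_add_distrib]
      refine Finset.sum_congr rfl fun lam _ => ?_
      ring
    rw [expand]
    simp only [e1, Finset.sum_add_distrib]
    ring
  have hY : (∑ i, ∑ j, ∑ α, ∑ lam, G i j * Hy α lam σ * P α i * P lam j)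
      = (∑ i, ∑ j, G i j * B1 i j) + ∑ i, ∑ j, G i j * B1 j i := by
    rw [← Finset.sum_add_distrib]
    refine Finset.sum_congr rfl fun i _ => ?_
    rw [← Finset.sum_add_distrib]
    refine Finset.sum_congr rfl fun j _ => ?_
    have step1 : (∑ α, ∑ lam, G i j * Hy α lam σ * P α i * P lam j)
        = (∑ α, ∑ lam, ∑ s, G i j * (CN s α σ * H s lam * P α i * P lam j))
          + ∑ α, ∑ lam, ∑ s, G i j * (CN s lam σ * H s α * P α i * P lam j) := by
      rw [← Finset.sum_add_distrib]
      refine Finset.sum_congr rfl fun α _ => ?_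
      rw [← Finset.sum_add_distrib]
      refine Finset.sum_congr rfl fun lam _ => ?_
      rw [← Finset.sum_add_distrib, hco α lam σ, Finset.mul_sum, Finset.sum_mul,
        Finset.sum_mul]
      refine Finset.sum_congr rfl fun s _ => ?_
      ring
    rw [step1]
    congr 1
    · rw [hB1, Finset.mul_sum]
      refine Finset.sum_congr rfl fun α _ => ?_
      rw [Finset.mul_sum]
      refine Finset.sum_congr rfl fun lam _ => ?_
      rw [Finset.mul_sum]
    · rw [hB1, Finset.mul_sum]
      rw [Finset.sum_comm]
      refine Finset.sum_congr rfl fun lam _ => ?_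
      rw [Finset.mul_sum]
      refine Finset.sum_congr rfl fun α _ => ?_
      rw [Finset.mul_sum]
      refine Finset.sum_congr rfl fun s _ => ?_
      ring
  have hBsymm : (∑ i : Fin m, ∑ j : Fin m, G i j * B1 j i)
      = ∑ i : Fin m, ∑ j : Fin m, G i j * B1 i j := by
    rw [Finset.sum_comm]
    exact Finset.sum_congr rfl fun j _ => Finset.sum_congr rfl fun i _ => by rw [hG j i]
  have hRHS : (∑ i, ∑ j, ∑ ν, G i j * H σ ν * (P2 ν j i - ∑ k, CM k i j * P ν k
        + ∑ α, ∑ lam, CN ν α lam * P α i * P lam j))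
      = (∑ k, ∑ j, ∑ lam, G k j * H σ lam * P2 lam j k)
        - (∑ i, ∑ j, ∑ ν, G i j * H σ ν * (∑ k, CM k i j * P ν k))
        + ∑ i, ∑ j, G i j * C i j := by
    have expand : (∑ i, ∑ j, ∑ ν, G i j * H σ ν * (P2 ν j i - ∑ k, CM k i j * P ν k
          + ∑ α, ∑ lam, CN ν α lam * P α i * P lam j))
        = ∑ i, ∑ j, ((∑ ν, G i j * H σ ν * P2 ν j i)
            - (∑ ν, G i j * H σ ν * (∑ k, CM k i j * P ν k))
            + ∑ ν, G i j * H σ ν * (∑ α, ∑ lam, CN ν α lam * P α i * P lam j)) := by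
      refine Finset.sum_congr rfl fun i _ => Finset.sum_congr rfl fun j _ => ?_
      rw [← Finset.sum_sub_distrib, ← Finset.sum_add_distrib]
      refine Finset.sum_congr rfl fun ν _ => ?_
      ring
    rw [expand]
    simp only [Finset.sum_add_distrib, Finset.sum_sub_distrib]
    congr 1
    refine Finset.sum_congr rfl fun i _ => Finset.sum_congr rfl fun j _ => ?_
    rw [hC, Finset.mul_sum]
    refine Finset.sum_congr rfl fun ν _ => ?_
    rw [Finset.mul_sum, Finset.mul_sum]
    refine Finset.sum_congr rfl fun α _ => ?_
    rw [Finset.mul_sum, Finset.mul_sum]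
    refine Finset.sum_congr rfl fun lam _ => ?_
    ring
  have htrace_step : (∑ k, ∑ j, ∑ lam, (D k j k * H σ lam * P lam j
        + G k j * Hx σ lam k * P lam j))
      = -(∑ i, ∑ j, ∑ ν, G i j * H σ ν * (∑ k, CM k i j * P ν k)) := by
    have hR : (∑ i, ∑ j, ∑ ν, G i j * H σ ν * (∑ k, CM k i j * P ν k))
        = ∑ l, ∑ ν, (H σ ν * (∑ i, ∑ j, G i j * CM l i j) * P ν l) := by
      have e : (∑ i, ∑ j, ∑ ν, G i j * H σ ν * (∑ k, CM k i j * P ν k))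
          = ∑ i, ∑ j, ∑ ν, ∑ k, G i j * H σ ν * (CM k i j * P ν k) := by
        refine Finset.sum_congr rfl fun i _ => Finset.sum_congr rfl fun j _ =>
          Finset.sum_congr rfl fun ν _ => ?_
        rw [Finset.mul_sum]
      rw [e, reorder4 (fun i j ν k => G i j * H σ ν * (CM k i j * P ν k))]
      refine Finset.sum_congr rfl fun l _ => Finset.sum_congr rfl fun ν _ => ?_
      rw [Finset.mul_sum, Finset.sum_mul]
      refine Finset.sum_congr rfl fun i _ => ?_
      rw [Finset.mul_sum, Finset.sum_mul]
      refine Finset.sum_congr rfl fun j _ => ?_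
      ring
    have hL : (∑ k, ∑ j, ∑ lam, (D k j k * H σ lam * P lam j + G k j * Hx σ lam k * P lam j))
        = ∑ j, ∑ lam, ((H σ lam * (∑ p, D j p p) + ∑ p, Hx σ lam p * G j p) * P lam j) := by
      rw [rot3' (fun k j lam => D k j k * H σ lam * P lam j + G k j * Hx σ lam k * P lam j)]
      refine Finset.sum_congr rfl fun j _ => Finset.sum_congr rfl fun lam _ => ?_
      rw [add_mul, Finset.mul_sum, Finset.sum_mul, Finset.sum_mul, ← Finset.sum_add_distrib]
      refine Finset.sum_congr rfl fun k _ => ?_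
      rw [hD k j k, hG k j]
      ring
    have key : ∀ (j : Fin m) (lam : Fin n),
        (H σ lam * (∑ p, D j p p) + ∑ p, Hx σ lam p * G j p)
          = -(H σ lam * (∑ i, ∑ j', G i j' * CM j i j')) := by
      intro j lam
      have h1 := htr j σ lam
      rw [mul_add] at h1
      linarith
    rw [hL, hR]
    have : ∀ (j : Fin m) (lam : Fin n),
        (H σ lam * (∑ p, D j p p) + ∑ p, Hx σ lam p * G j p) * P lam j
          = -(H σ lam * (∑ i, ∑ j', G i j' * CM j i j') * P lam j) := fun j lam => by
      rw [key j lam]; ring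
    calc (∑ j, ∑ lam, ((H σ lam * (∑ p, D j p p) + ∑ p, Hx σ lam p * G j p) * P lam j))
        = ∑ j, ∑ lam, -(H σ lam * (∑ i, ∑ j', G i j' * CM j i j') * P lam j) :=
          Finset.sum_congr rfl fun j _ => Finset.sum_congr rfl fun lam _ => this j lam
      _ = -(∑ j, ∑ lam, (H σ lam * (∑ i, ∑ j', G i j' * CM j i j') * P lam j)) := by
          simp [Finset.sum_neg_distrib]
  rw [hsplit, hY, hBsymm, hRHS, htrace_step]
  ring

/-- Under the two variationality conditions obtained from the Helmholtz conditions, the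
Euler–Lagrange expression of `L = ½ g^{ij} h_{αλ} u^α_i u^λ_j` equals the geodesic mapping
expression multiplied by `B^{ij}_{σν} = g^{ij} h_{σν}`. -/
theorem stmt8 (m n : ℕ)
    (g : Fin m → Fin m → (Fin m → ℝ) → ℝ)
    (hg : ∀ i j, ContDiff ℝ (⊤ : ℕ∞) (g i j))
    (hgsym : ∀ i j, g i j = g j i)
    (h : Fin n → Fin n → (Fin m → ℝ) → (Fin n → ℝ) → ℝ)
    (hh : ∀ μ ν, ContDiff ℝ (⊤ : ℕ∞) (fun p : (Fin m → ℝ) × (Fin n → ℝ) => h μ ν p.1 p.2))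
    (hhsym : ∀ μ ν, h μ ν = h ν μ)
    (ΓM : Fin m → Fin m → Fin m → (Fin m → ℝ) → ℝ)
    (hΓM : ∀ k i j, ContDiff ℝ (⊤ : ℕ∞) (ΓM k i j))
    (hΓMsym : ∀ k i j, ΓM k i j = ΓM k j i)
    (ΓN : Fin n → Fin n → Fin n → (Fin n → ℝ) → ℝ)
    (hΓN : ∀ σ α lam, ContDiff ℝ (⊤ : ℕ∞) (ΓN σ α lam))
    (hΓNsym : ∀ σ α lam, ΓN σ α lam = ΓN σ lam α)
    (hcomp : ∀ (x : Fin m → ℝ) (y : Fin n → ℝ) (μ ν lam : Fin n),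
      pdy (h μ ν) lam x y
        = ∑ σ, (ΓN σ μ lam y * h σ ν x y + ΓN σ ν lam y * h σ μ x y))
    (htrace : ∀ (x : Fin m → ℝ) (y : Fin n → ℝ) (l : Fin m) (μ ν : Fin n),
      h μ ν x y * ((∑ i, ∑ j, g i j x * ΓM l i j x) + ∑ p, pd (g l p) p x)
        = -∑ p, pdx (h μ ν) p x y * g l p x)
    (φ : (Fin m → ℝ) → Fin n → ℝ)
    (hφ : ContDiff ℝ (⊤ : ℕ∞) φ) :
    ∀ (x : Fin m → ℝ) (σ : Fin n),
      (∑ k, pd (fun x' => fderiv ℝ (fun u => Lag g h x' (φ x') u) (Dmap φ x')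
            (Pi.single σ (Pi.single k 1))) k x)
        - fderiv ℝ (fun y => Lag g h x y (Dmap φ x)) (φ x) (Pi.single σ 1)
      = ∑ i, ∑ j, ∑ ν, g i j x * h σ ν x (φ x) *
          (pd (pd (fun z => φ z ν) j) i x
            - ∑ k, ΓM k i j x * pd (fun z => φ z ν) k x
            + ∑ α, ∑ lam, ΓN ν α lam (φ x) * pd (fun z => φ z α) i x
                * pd (fun z => φ z lam) j x) := by
  intro x σ
  have hstep1 : ∀ k : Fin m,
      (fun x' => fderiv ℝ (fun u => Lag g h x' (φ x') u) (Dmap φ x')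
        (Pi.single σ (Pi.single k 1)))
      = fun x' => ∑ j, ∑ lam, g k j x' * h σ lam x' (φ x')
          * pd (fun z => φ z lam) j x' := by
    intro k; funext x'
    rw [lagU g h hgsym hhsym x' (φ x') (Dmap φ x') σ k]
    rfl
  have hleft : (∑ k, pd (fun x' => fderiv ℝ (fun u => Lag g h x' (φ x') u) (Dmap φ x')
        (Pi.single σ (Pi.single k 1))) k x)
      = ∑ k, ∑ j, ∑ lam, (pd (g k j) k x * h σ lam x (φ x) * pd (fun z => φ z lam) j x
          + g k j x * (pdx (h σ lam) k x (φ x)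
              + ∑ μ, pdy (h σ lam) μ x (φ x) * pd (fun z => φ z μ) k x)
              * pd (fun z => φ z lam) j x
          + g k j x * h σ lam x (φ x) * pd (pd (fun z => φ z lam) j) k x) := by
    refine Finset.sum_congr rfl fun k _ => ?_
    rw [hstep1 k]
    exact pdF g hg h hh φ hφ σ k x
  have hyterm : fderiv ℝ (fun y => Lag g h x y (Dmap φ x)) (φ x) (Pi.single σ 1)
      = (1/2) * ∑ i, ∑ j, ∑ α, ∑ lam, g i j x * pdy (h α lam) σ x (φ x)
          * pd (fun z => φ z α) i x * pd (fun z => φ z lam) j x := by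
    rw [lagY g h hh x (Dmap φ x) (φ x) σ]
    rfl
  rw [hleft, hyterm]
  exact algebra m n (fun i j => g i j x)
    (fun i j => by show g i j x = g j i x; rw [hgsym i j])
    (fun a b c => pd (g a b) c x)
    (fun a b c => by show pd (g a b) c x = pd (g b a) c x; rw [hgsym a b])
    (fun a b => h a b x (φ x))
    (fun a b => by show h a b x (φ x) = h b a x (φ x); rw [hhsym a b])
    (fun a b p => pdx (h a b) p x (φ x))
    (fun a b c => pdy (h a b) c x (φ x))
    (fun k i j => ΓM k i j x)
    (fun s a b => ΓN s a b (φ x)) (fun s a b => by show ΓN s a b (φ x) = ΓN s b a (φ x); rw [hΓNsym s a b])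
    (fun ν i => pd (fun z => φ z ν) i x)
    (fun ν j i => pd (pd (fun z => φ z ν) j) i x)
    σ
    (fun μ ν lam => hcomp x (φ x) μ ν lam)
    (fun l μ ν => htrace x (φ x) l μ ν)
end
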